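/- Let P be a positively skewed probability distribution (meaning -X ≤_c X for X ~ P, in the convex transform order) with a continuous strictly increasing CDF on its supporting interval. If P is unimodal with mode m₀, then there exists a median m₁ of P with m₀ ≤ m₁. -/

import Mathlib

open MeasureTheory ProbabilityTheory Set Filter Topology

/-!
Write `F` for the cdf of `P` and `q` for its inverse on `(0, 1)`. The convex transform in `-X ≤_c X`
is `φ (-x) = q (1 - F x)`: it sends `x` to the point with as much mass below it as `x` has above it.
Suppose `F m₀ > 1/2`, let `y = q (1 - F m₀)`, and take `a < m₀` close to `m₀` with `F a > 1/2` and
`b = q (1 - F a)`. Then `y < b < a < m₀`, the intervals `(a, m₀]` and `(y, b]` carry the same mass,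
and as `φ` swaps `-a` and `-b`, convexity of `φ` forces `b - y ≤ m₀ - a`. So the mean density on
`(y, b]` is at least the one on `(a, m₀]`, and letting `a → m₀` gives `f y ≥ f m₀`, contradicting
the uniqueness of the mode. Hence `F m₀ ≤ 1/2`, and a median `m₁ ≥ m₀` exists by the intermediate
value theorem.
-/

lemma ConvexOn.sub_le_sub_of_sub_eq_sub {s : Set ℝ} {φ : ℝ → ℝ} (hφ : ConvexOn ℝ s φ)
    {x y z : ℝ} (hx : x ∈ s) (hz : z ∈ s) (hxy : x < y) (hyz : y < z)
    (h : φ z - φ y = z - y) : φ y - φ x ≤ y - x := by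
  have := hφ.slope_mono_adjacent hx hz hxy hyz
  rwa [h, div_self (sub_pos.2 hyz).ne', div_le_one (sub_pos.2 hxy)] at this

section Density

variable {f : ℝ → ℝ} {a b c : ℝ}

local notation "μ" => volume.withDensity (fun x => ENNReal.ofReal (f x))

lemma withDensity_ofReal_Ioc_le (h : ∀ x ∈ Ioc a b, f x ≤ c) :
    μ (Ioc a b) ≤ ENNReal.ofReal c * ENNReal.ofReal (b - a) := by
  rw [withDensity_apply _ measurableSet_Ioc, ← Real.volume_Ioc, ← setLIntegral_const]
  exact setLIntegral_mono' measurableSet_Ioc fun x hx => ENNReal.ofReal_le_ofReal (h x hx)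

lemma le_withDensity_ofReal_Ioc (h : ∀ x ∈ Ioc a b, c ≤ f x) :
    ENNReal.ofReal c * ENNReal.ofReal (b - a) ≤ μ (Ioc a b) := by
  rw [withDensity_apply _ measurableSet_Ioc, ← Real.volume_Ioc, ← setLIntegral_const]
  exact setLIntegral_mono' measurableSet_Ioc fun x hx => ENNReal.ofReal_le_ofReal (h x hx)

lemma exists_pos_of_withDensity_ofReal_ne_zero {s : Set ℝ} (hs : MeasurableSet s)
    (h : μ s ≠ 0) : ∃ x ∈ s, 0 < f x := by
  contrapose! h
  rw [withDensity_apply _ hs, ← nonpos_iff_eq_zero, ← lintegral_zero]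
  exact setLIntegral_mono' hs fun x hx => (ENNReal.ofReal_eq_zero.2 (h x hx)).le

lemma le_of_withDensity_ofReal_Ioc_eq {a' b' α β : ℝ} (hα : ∀ x ∈ Ioc a b, α ≤ f x)
    (hβ : ∀ x ∈ Ioc a' b', f x ≤ β) (hlen : b' - a' ≤ b - a)
    (hmass : μ (Ioc a b) = μ (Ioc a' b')) (hne : μ (Ioc a' b') ≠ 0) : α ≤ β := by
  have hupper := withDensity_ofReal_Ioc_le hβ
  obtain ⟨hβ_ne, hlen_ne⟩ := mul_ne_zero_iff.1 ((pos_iff_ne_zero.2 hne).trans_le hupper).ne'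
  have hβ_pos : 0 < β := ENNReal.ofReal_ne_zero_iff.1 hβ_ne
  have hlen_pos : 0 < b - a := (ENNReal.ofReal_ne_zero_iff.1 hlen_ne).trans_le hlen
  have hmul :
      ENNReal.ofReal α * ENNReal.ofReal (b - a) ≤ ENNReal.ofReal β * ENNReal.ofReal (b - a) :=
    calc ENNReal.ofReal α * ENNReal.ofReal (b - a) ≤ μ (Ioc a b) := le_withDensity_ofReal_Ioc hα
      _ ≤ ENNReal.ofReal β * ENNReal.ofReal (b' - a') := hmass ▸ hupper
      _ ≤ ENNReal.ofReal β * ENNReal.ofReal (b - a) := by gcongr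
  rwa [ENNReal.mul_le_mul_iff_left (ENNReal.ofReal_ne_zero_iff.2 hlen_pos) ENNReal.ofReal_ne_top,
    ENNReal.ofReal_le_ofReal_iff hβ_pos.le] at hmul

lemma le_of_eventually_withDensity_ofReal_Ioc_eq {y m : ℝ} (hy : ContinuousAt f y)
    (hm : ContinuousAt f m)
    (h : ∀ᶠ a in 𝓝[<] m, ∃ b, b - y ≤ m - a ∧ μ (Ioc a m) = μ (Ioc y b) ∧ μ (Ioc y b) ≠ 0) :
    f m ≤ f y := by
  by_contra! hlt
  obtain ⟨β, hyβ, hβm⟩ := exists_between hlt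
  obtain ⟨α, hβα, hαm⟩ := exists_between hβm
  obtain ⟨δ₁, hδ₁, hα⟩ := Metric.eventually_nhds_iff.1 (hm.eventually (lt_mem_nhds hαm))
  obtain ⟨δ₂, hδ₂, hβ⟩ := Metric.eventually_nhds_iff.1 (hy.eventually (gt_mem_nhds hyβ))
  obtain ⟨a, ⟨b, hlen, hmass, hne⟩, hδa, -⟩ :=
    (h.and (Ioo_mem_nhdsLT (sub_lt_self m (lt_min hδ₁ hδ₂)))).exists
  have := le_of_withDensity_ofReal_Ioc_eq
    (fun x hx => (hα (by
      rw [Real.dist_eq, abs_sub_lt_iff]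
      constructor <;> linarith [min_le_left δ₁ δ₂, hx.1, hx.2])).le)
    (fun x hx => (hβ (by
      rw [Real.dist_eq, abs_sub_lt_iff]
      constructor <;> linarith [min_le_right δ₁ δ₂, hx.1, hx.2])).le)
    hlen hmass hne
  linarith

end Density

section Cdf

variable {P : Measure ℝ}

lemma exists_cdf_eq (hFc : Continuous (cdf P)) {s : ℝ} (hs : s ∈ Ioo 0 1) : ∃ x, cdf P x = s := by
  have hbot := ((tendsto_cdf_atBot P).eventually (eventually_lt_nhds hs.1)).exists
  have htop := ((tendsto_cdf_atTop P).eventually (eventually_gt_nhds hs.2)).exists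
  exact mem_range_of_exists_le_of_exists_ge hFc (hbot.imp fun _ => le_of_lt)
    (htop.imp fun _ => le_of_lt)

lemma cdf_invFun_cdf (hFc : Continuous (cdf P)) {s : ℝ} (hs : s ∈ Ioo 0 1) :
    cdf P (Function.invFun (cdf P) s) = s :=
  Function.invFun_eq (exists_cdf_eq hFc hs)

variable [IsProbabilityMeasure P]

lemma measure_Ioc_eq_ofReal_cdf_sub (a b : ℝ) :
    P (Ioc a b) = ENNReal.ofReal (cdf P b - cdf P a) := by
  conv_lhs => rw [← measure_cdf P]
  exact (cdf P).measure_Ioc a b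

lemma cdf_map_neg [NullSingletonClass P] (x : ℝ) :
    cdf (P.map fun z => -z) x = 1 - cdf P (-x) := by
  have := Measure.isProbabilityMeasure_map (μ := P) (measurable_neg (G := ℝ)).aemeasurable
  have hpre : (fun z : ℝ => -z) ⁻¹' Iic x = (Iio (-x))ᶜ := by
    ext z; simp
  rw [cdf_eq_real, map_measureReal_apply measurable_neg measurableSet_Iic, hpre,
    probReal_compl_eq_one_sub measurableSet_Iio, measureReal_congr Iio_ae_eq_Iic, cdf_eq_real]

lemma exists_median_ge (hFc : Continuous (cdf P)) {x : ℝ} (hx : cdf P x ≤ 1 / 2) :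
    ∃ m, x ≤ m ∧ P (Iic m) ≥ 1 / 2 ∧ P (Ici m) ≥ 1 / 2 := by
  obtain ⟨y, hy, hxy⟩ := (((tendsto_cdf_atTop P).eventually
    (eventually_ge_nhds (by norm_num : (1 : ℝ) / 2 < 1))).and (eventually_ge_atTop x)).exists
  obtain ⟨m, hm, hFm⟩ := intermediate_value_Icc hxy hFc.continuousOn ⟨hx, hy⟩
  have hIic : P (Iic m) = 1 / 2 := by
    rw [← ofReal_cdf, hFm, ENNReal.ofReal_div_of_pos two_pos]
    simp
  refine ⟨m, hm.1, hIic.ge, ?_⟩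
  calc (1 / 2 : ENNReal) = 1 - P (Iic m) := by rw [hIic, one_div, ENNReal.one_sub_inv_two]
    _ ≤ 1 - P (Iio m) := tsub_le_tsub_left (measure_mono Iio_subset_Iic_self) 1
    _ = P (Ici m) := by rw [← prob_compl_eq_one_sub measurableSet_Iio, compl_Iio]

end Cdf

section Support

variable {P : Measure ℝ} [IsProbabilityMeasure P] {I : Set ℝ}

lemma mem_of_cdf_mem_Ioo (hI : I.OrdConnected) (hPI : P I = 1) {x : ℝ}
    (hx : cdf P x ∈ Ioo 0 1) : x ∈ I := by
  have hIc : P Iᶜ = 0 := by rw [prob_compl_eq_one_sub hI.measurableSet, hPI, tsub_self]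
  have hmeets : ∀ s, P s ≠ 0 → (s ∩ I).Nonempty := fun s hs =>
    nonempty_of_measure_ne_zero (by rwa [measure_inter_conull hIc])
  obtain ⟨y, hyx, hyI⟩ := hmeets (Iic x) (by
    rw [← ofReal_cdf]; exact (ENNReal.ofReal_pos.2 hx.1).ne')
  obtain ⟨z, hxz, hzI⟩ := hmeets (Ioi x) (by
    rw [← compl_Iic, prob_compl_eq_one_sub measurableSet_Iic, ← ofReal_cdf]
    exact (tsub_pos_of_lt (ENNReal.ofReal_lt_one.2 hx.2)).ne')
  exact hI.out hyI hzI ⟨hyx, le_of_lt hxz⟩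

lemma invFun_cdf_mem (hI : I.OrdConnected) (hPI : P I = 1) (hFc : Continuous (cdf P)) {s : ℝ}
    (hs : s ∈ Ioo 0 1) : Function.invFun (cdf P) s ∈ I :=
  mem_of_cdf_mem_Ioo hI hPI (by rwa [cdf_invFun_cdf hFc hs])

lemma invFun_cdf_cdf (hI : I.OrdConnected) (hPI : P I = 1) (hFc : Continuous (cdf P))
    (hF : StrictMonoOn (cdf P) I) {x : ℝ} (hx : x ∈ I) (hFx : cdf P x ∈ Ioo 0 1) :
    Function.invFun (cdf P) (cdf P x) = x :=
  hF.injOn (invFun_cdf_mem hI hPI hFc hFx) hx (cdf_invFun_cdf hFc hFx)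

lemma invFun_cdf_one_sub_sub_le_of_convexOn [NullSingletonClass P] (hI : I.OrdConnected)
    (hPI : P I = 1) (hFc : Continuous (cdf P)) (hF : StrictMonoOn (cdf P) I)
    (hskew : ConvexOn ℝ ((fun x => -x) '' I)
      (fun x => Function.invFun (cdf P) (cdf (P.map fun z => -z) x)))
    {a m : ℝ} (ha : a ∈ I) (hm : m ∈ I) (ham : a < m) (ha_half : 1 / 2 < cdf P a)
    (hm_lt : cdf P m < 1) :
    Function.invFun (cdf P) (1 - cdf P a) - Function.invFun (cdf P) (1 - cdf P m) ≤ m - a := by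
  set q := Function.invFun (cdf P)
  have hφ (x : ℝ) : q (cdf (P.map fun z => -z) (-x)) = q (1 - cdf P x) := by
    rw [cdf_map_neg, neg_neg]
  have hFa : cdf P a ∈ Ioo 0 1 := ⟨by linarith, (hF ha hm ham).trans hm_lt⟩
  have hFb : cdf P (q (1 - cdf P a)) = 1 - cdf P a :=
    cdf_invFun_cdf hFc ⟨by linarith [hFa.2], by linarith⟩
  set b := q (1 - cdf P a)
  have hbI : b ∈ I := invFun_cdf_mem hI hPI hFc ⟨by linarith [hFa.2], by linarith⟩
  have hba : b < a := (hF.lt_iff_lt hbI ha).1 (by linarith)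
  -- the reflection `x ↦ q (1 - F x)` swaps `a` and `b`, so its chord over `[-a, -b]` has slope one
  have hqb : q (1 - cdf P b) = a := by
    rw [hFb, sub_sub_cancel]; exact invFun_cdf_cdf hI hPI hFc hF ha hFa
  have := hskew.sub_le_sub_of_sub_eq_sub ⟨m, hm, rfl⟩ ⟨b, hbI, rfl⟩ (neg_lt_neg ham)
    (neg_lt_neg hba) (by simp only [hφ, hqb]; ring)
  simp only [hφ] at this
  linarith

end Support

section Mode

variable {P : Measure ℝ} [IsProbabilityMeasure P] {f : ℝ → ℝ}

lemma cdf_lt_one_of_density_pos (hPd : P = volume.withDensity (fun x => ENNReal.ofReal (f x)))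
    {x : ℝ} (hf : ContinuousAt f x) (hx : 0 < f x) : cdf P x < 1 := by
  obtain ⟨δ, hδ, hball⟩ :=
    Metric.eventually_nhds_iff.1 (hf.eventually (lt_mem_nhds (half_lt_self hx)))
  have hlower : ENNReal.ofReal (f x / 2) * ENNReal.ofReal (x + δ / 2 - x) ≤
      P (Ioc x (x + δ / 2)) := hPd ▸ le_withDensity_ofReal_Ioc fun z hz =>
    (hball (by rw [Real.dist_eq, abs_sub_lt_iff]; constructor <;> linarith [hz.1, hz.2])).le
  rw [measure_Ioc_eq_ofReal_cdf_sub, ← ENNReal.ofReal_mul (by positivity),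
    ENNReal.ofReal_le_ofReal_iff'] at hlower
  have : 0 < f x / 2 * (x + δ / 2 - x) := mul_pos (half_pos hx) (by linarith)
  linarith [cdf_le_one P (x + δ / 2), hlower.resolve_right (by linarith)]

lemma cdf_mode_le_half {I : Set ℝ} (hI : I.OrdConnected) (hPI : P I = 1)
    (hFc : Continuous (cdf P)) (hF : StrictMonoOn (cdf P) I) (hf : Continuous f)
    (hPd : P = volume.withDensity (fun x => ENNReal.ofReal (f x)))
    {m₀ : ℝ} (hm₀ : m₀ ∈ I ∧ ∀ x ∈ I, x ≠ m₀ → f x < f m₀)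
    (hskew : ConvexOn ℝ ((fun x => -x) '' I)
      (fun x => Function.invFun (cdf P) (cdf (P.map fun z => -z) x))) :
    cdf P m₀ ≤ 1 / 2 := by
  have : NullSingletonClass P := hPd ▸ inferInstance
  have hfm : 0 < f m₀ := by
    obtain ⟨x, hxI, hx⟩ := exists_pos_of_withDensity_ofReal_ne_zero hI.measurableSet
      (hPd ▸ hPI ▸ one_ne_zero)
    rcases eq_or_ne x m₀ with rfl | hne
    exacts [hx, hx.trans (hm₀.2 x hxI hne)]
  by_contra! hu
  have hu1 : cdf P m₀ < 1 := cdf_lt_one_of_density_pos hPd hf.continuousAt hfm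
  set q := Function.invFun (cdf P)
  have hFy : cdf P (q (1 - cdf P m₀)) = 1 - cdf P m₀ :=
    cdf_invFun_cdf hFc ⟨by linarith, by linarith⟩
  set y := q (1 - cdf P m₀)
  have hyI : y ∈ I := invFun_cdf_mem hI hPI hFc ⟨by linarith, by linarith⟩
  have hym : y < m₀ := (hF.lt_iff_lt hyI hm₀.1).1 (by linarith)
  refine (hm₀.2 y hyI hym.ne).not_ge
    (le_of_eventually_withDensity_ofReal_Ioc_eq hf.continuousAt hf.continuousAt ?_)
  rw [← hPd]
  filter_upwards [Ioo_mem_nhdsLT hym,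
    (hFc.continuousAt.tendsto.mono_left nhdsWithin_le_nhds).eventually (lt_mem_nhds hu)]
    with a ⟨hya, ham⟩ hFa
  have haI : a ∈ I := hI.out hyI hm₀.1 ⟨hya.le, ham.le⟩
  have hFam : cdf P a < cdf P m₀ := hF haI hm₀.1 ham
  have hFb : cdf P (q (1 - cdf P a)) = 1 - cdf P a :=
    cdf_invFun_cdf hFc ⟨by linarith, by linarith⟩
  refine ⟨q (1 - cdf P a),
    invFun_cdf_one_sub_sub_le_of_convexOn hI hPI hFc hF hskew haI hm₀.1 ham hFa hu1, ?_, ?_⟩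
  · rw [measure_Ioc_eq_ofReal_cdf_sub, measure_Ioc_eq_ofReal_cdf_sub, hFb, hFy]
    ring_nf
  · rw [measure_Ioc_eq_ofReal_cdf_sub, hFb, hFy, ENNReal.ofReal_ne_zero_iff]
    linarith

end Mode

/-- Theorem 14 (mode–median): a positively skewed unimodal distribution has a
median at least as large as its mode. -/
theorem mode_le_median_of_positively_skewed
    (P : Measure ℝ) [IsProbabilityMeasure P]
    (I : Set ℝ) (hI : I.OrdConnected) (hPI : P I = 1)
    (hFc : Continuous (fun x => cdf P x))
    (hF : StrictMonoOn (fun x => cdf P x) I)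
    -- unimodality: a continuous density with unique maximizer `m₀`:
    (f : ℝ → ℝ) (hf : Continuous f)
    (hPd : P = volume.withDensity (fun x => ENNReal.ofReal (f x)))
    (m₀ : ℝ) (hm₀ : m₀ ∈ I ∧ ∀ x ∈ I, x ≠ m₀ → f x < f m₀)
    -- positive skewness: `-X ≤_c X`:
    (hskew : ConvexOn ℝ ((fun x => -x) '' I)
      (fun x => Function.invFun (fun y => cdf P y)
        (cdf (Measure.map (fun z => -z) P) x))) :
    ∃ m₁ : ℝ, P (Set.Iic m₁) ≥ 1 / 2 ∧ P (Set.Ici m₁) ≥ 1 / 2 ∧ m₀ ≤ m₁ := by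
  obtain ⟨m₁, hm₀m₁, hIic, hIci⟩ :=
    exists_median_ge hFc (cdf_mode_le_half hI hPI hFc hF hf hPd hm₀ hskew)
  exact ⟨m₁, hIic, hIci, hm₀m₁⟩
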